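/- Let N ≥ 1 and let u₀ ∈ L¹(ℝ^N) have finite second absolute moment 𝒩₂ = ∫_{ℝ^N} |y|² |u₀(y)| dy < ∞. Let M = ∫_{ℝ^N} u₀(x) dx, let 𝒩_{1,i} = ∫_{ℝ^N} y_i u₀(y) dy for i = 1,…,N, and let u(x,t) = ∫_{ℝ^N} G_t(x−y) u₀(y) dy. Then there is a constant C > 0 depending only on N such that for all t > 0, ∫_{ℝ^N} |u(x,t) − M·G_t(x) + Σᵢ 𝒩_{1,i} ∂_{x_i} G_t(x)| dx ≤ C·𝒩₂·t^{−1}. -/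

import Mathlib

open MeasureTheory Real Filter

/-- The Gaussian heat kernel on `ℝ^N`: `G_t(x) = (4πt)^{-N/2} exp(-|x|²/(4t))`. -/
noncomputable def heatKernel (N : ℕ) (t : ℝ) (x : EuclideanSpace ℝ (Fin N)) : ℝ :=
  (4 * π * t) ^ (-(N : ℝ) / 2) * exp (-‖x‖ ^ 2 / (4 * t))

/-- The solution of the heat equation with initial data `u₀`, given by convolution
with the heat kernel: `u(x,t) = ∫ G_t(x-y) u₀(y) dy`. -/
noncomputable def heatSol (N : ℕ) (u₀ : EuclideanSpace ℝ (Fin N) → ℝ)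
    (x : EuclideanSpace ℝ (Fin N)) (t : ℝ) : ℝ :=
  ∫ y, heatKernel N t (x - y) * u₀ y

/-!
The error at `x` equals `∫ R(x, y) u₀(y) dy`, where
`R(x, y) = G_t(x - y) - G_t(x) - ⟨x, y⟩ / (2t) · G_t(x)` is the remainder of the first-order
Taylor expansion of `y ↦ G_t(x - y)` at `0`. Taylor's formula along the segment from `x` to
`x - y` bounds `|R(x, y)|` by `|y|² ∫₀¹ (|z|² / (4t²) + 1 / (2t)) G_t(z) dr` with `z = x - r y`,
and `|z|² / (4t) · G_t(z) ≤ 2^{N/2+1} G_{2t}(z)`. Integrating in `x` and using translation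
invariance gives `∫ |R(x, y)| dx ≤ C |y|² / t`, and Tonelli's theorem finishes the proof.
-/

open scoped RealInnerProductSpace

section Taylor

variable {E : Type*} [NormedAddCommGroup E] [NormedSpace ℝ E] [CompleteSpace E]

theorem norm_sub_sub_deriv_le_integral_norm {g g' g'' : ℝ → E}
    (hg : ∀ s, HasDerivAt g (g' s) s) (hg' : ∀ s, HasDerivAt g' (g'' s) s)
    (hg'' : Continuous g'') :
    ‖g 1 - g 0 - g' 0‖ ≤ ∫ r in (0 : ℝ)..1, ‖g'' r‖ := by
  have hg'_cont : Continuous g' := continuous_iff_continuousAt.2 fun s => (hg' s).continuousAt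
  have hfirst : g 1 - g 0 - g' 0 = ∫ s in (0 : ℝ)..1, (g' s - g' 0) := by
    rw [intervalIntegral.integral_sub (hg'_cont.intervalIntegrable 0 1) intervalIntegrable_const,
      intervalIntegral.integral_eq_sub_of_hasDerivAt (fun s _ => hg s)
        (hg'_cont.intervalIntegrable 0 1)]
    simp
  rw [hfirst]
  refine (intervalIntegral.norm_integral_le_of_norm_le_const
    (C := ∫ r in (0 : ℝ)..1, ‖g'' r‖) fun s hs => ?_).trans_eq (by simp)
  rw [Set.uIoc_of_le zero_le_one] at hs
  rw [← intervalIntegral.integral_eq_sub_of_hasDerivAt (fun r _ => hg' r)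
    (hg''.intervalIntegrable 0 s)]
  calc ‖∫ r in (0 : ℝ)..s, g'' r‖ ≤ ∫ r in (0 : ℝ)..s, ‖g'' r‖ :=
        intervalIntegral.norm_integral_le_integral_norm hs.1.le
    _ ≤ ∫ r in (0 : ℝ)..1, ‖g'' r‖ :=
        intervalIntegral.integral_mono_interval le_rfl hs.1.le hs.2
          (Eventually.of_forall fun r => norm_nonneg _) (hg''.norm.intervalIntegrable 0 1)

end Taylor

section IntegralOperator

variable {α β : Type*} [MeasurableSpace α] [MeasurableSpace β] {μ : Measure α} {ν : Measure β}
  [SFinite μ] [SFinite ν]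

theorem integral_abs_integral_mul_le {K : α → β → ℝ} {u B : β → ℝ}
    (hK : AEMeasurable (Function.uncurry K) (μ.prod ν)) (hu : AEMeasurable u ν)
    (hB : ∀ y, 0 ≤ B y) (hBu : Integrable (fun y => B y * |u y|) ν)
    (hKB : ∀ y, ∫⁻ x, ‖K x y‖ₑ ∂μ ≤ ENNReal.ofReal (B y)) :
    ∫ x, |∫ y, K x y * u y ∂ν| ∂μ ≤ ∫ y, B y * |u y| ∂ν := by
  have hlint : ∫⁻ x, ‖∫ y, K x y * u y ∂ν‖ₑ ∂μ ≤ ENNReal.ofReal (∫ y, B y * |u y| ∂ν) :=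
    calc ∫⁻ x, ‖∫ y, K x y * u y ∂ν‖ₑ ∂μ ≤ ∫⁻ x, ∫⁻ y, ‖K x y‖ₑ * ‖u y‖ₑ ∂ν ∂μ :=
          lintegral_mono fun x => by
            simpa only [enorm_mul] using
              enorm_integral_le_lintegral_enorm (μ := ν) (fun y => K x y * u y)
      _ = ∫⁻ y, (∫⁻ x, ‖K x y‖ₑ ∂μ) * ‖u y‖ₑ ∂ν := by
          rw [lintegral_lintegral_swap (hK.enorm.mul (hu.comp_snd).enorm)]
          simp_rw [lintegral_mul_const' _ _ enorm_ne_top]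
      _ ≤ ∫⁻ y, ENNReal.ofReal (B y * |u y|) ∂ν := lintegral_mono fun y => by
          rw [ENNReal.ofReal_mul (hB y), ← Real.enorm_eq_ofReal_abs]
          gcongr
          exact hKB y
      _ = ENNReal.ofReal (∫ y, B y * |u y| ∂ν) :=
          (ofReal_integral_eq_lintegral_ofReal hBu
            (Eventually.of_forall fun y => mul_nonneg (hB y) (abs_nonneg _))).symm
  calc ∫ x, |∫ y, K x y * u y ∂ν| ∂μ ≤ ‖∫ x, |∫ y, K x y * u y ∂ν| ∂μ‖ := le_abs_self _
    _ ≤ (∫⁻ x, ENNReal.ofReal ‖|∫ y, K x y * u y ∂ν|‖ ∂μ).toReal :=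
        norm_integral_le_lintegral_norm _
    _ ≤ ∫ y, B y * |u y| ∂ν := by
        refine ENNReal.toReal_le_of_le_ofReal
          (integral_nonneg fun y => mul_nonneg (hB y) (abs_nonneg _)) ?_
        simpa only [norm_abs_eq_norm, ofReal_norm] using hlint

end IntegralOperator

section Moments

theorem MeasureTheory.Integrable.norm_mul_of_sq_norm_mul {E : Type*} [NormedAddCommGroup E]
    [MeasurableSpace E] [OpensMeasurableSpace E] {μ : Measure E} {u : E → ℝ} (hu : Integrable u μ)
    (hu2 : Integrable (fun y => ‖y‖ ^ 2 * |u y|) μ) : Integrable (fun y => ‖y‖ * u y) μ := by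
  refine (hu.norm.add hu2).mono' (continuous_norm.aestronglyMeasurable.mul hu.1)
    (ae_of_all _ fun y => ?_)
  simp only [Pi.add_apply, norm_mul, Real.norm_eq_abs, abs_norm]
  nlinarith [abs_nonneg (u y), sq_nonneg (‖y‖ - 1)]

variable {ι : Type*} [Fintype ι] {μ : Measure (EuclideanSpace ℝ ι)} {u : EuclideanSpace ℝ ι → ℝ}

theorem integrable_inner_mul (hu : AEStronglyMeasurable u μ)
    (hu1 : Integrable (fun y => ‖y‖ * u y) μ) (x : EuclideanSpace ℝ ι) :
    Integrable (fun y => ⟪x, y⟫ * u y) μ := by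
  have hinner : Continuous fun y : EuclideanSpace ℝ ι => ⟪x, y⟫ := by fun_prop
  refine (hu1.norm.const_mul ‖x‖).mono' (hinner.aestronglyMeasurable.mul hu)
    (ae_of_all _ fun y => ?_)
  rw [norm_mul, norm_mul, norm_norm, ← mul_assoc]
  gcongr
  exact norm_inner_le_norm x y

theorem integral_inner_mul_eq_sum (hu : AEStronglyMeasurable u μ)
    (hu1 : Integrable (fun y => ‖y‖ * u y) μ) (x : EuclideanSpace ℝ ι) :
    ∫ y, ⟪x, y⟫ * u y ∂μ = ∑ i, x i * ∫ y, y i * u y ∂μ := by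
  have hcoord : ∀ i, Integrable (fun y : EuclideanSpace ℝ ι => x i * (y i * u y)) μ := fun i =>
    (hu1.norm.mono' ((PiLp.continuous_apply 2 _ i).aestronglyMeasurable.mul hu)
      (ae_of_all _ fun y => by
      simp only [Pi.mul_apply, norm_mul, norm_norm]
      gcongr
      exact PiLp.norm_apply_le y i)).const_mul (x i)
  simp_rw [← integral_const_mul, ← integral_finsetSum _ fun i _ => hcoord i, PiLp.inner_apply,
    Finset.sum_mul]
  refine integral_congr_ae (ae_of_all _ fun y => Finset.sum_congr rfl fun i _ => ?_)
  simp only [RCLike.inner_apply, conj_trivial]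
  ring

end Moments

section HeatKernel

variable {N : ℕ} {t : ℝ}

@[fun_prop]
theorem continuous_heatKernel (N : ℕ) (t : ℝ) : Continuous (heatKernel N t) := by
  unfold heatKernel
  fun_prop

theorem heatKernel_nonneg (ht : 0 < t) (x : EuclideanSpace ℝ (Fin N)) : 0 ≤ heatKernel N t x := by
  unfold heatKernel
  positivity

theorem heatKernel_le (ht : 0 < t) (x : EuclideanSpace ℝ (Fin N)) :
    heatKernel N t x ≤ (4 * π * t) ^ (-(N : ℝ) / 2) := by
  unfold heatKernel
  refine mul_le_of_le_one_right (by positivity) (exp_le_one_iff.2 ?_)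
  exact div_nonpos_of_nonpos_of_nonneg (neg_nonpos.2 (by positivity)) (by positivity)

theorem integral_heatKernel (ht : 0 < t) : ∫ x, heatKernel N t x = 1 := by
  have hexp : ∀ x : EuclideanSpace ℝ (Fin N), -‖x‖ ^ 2 / (4 * t) = -(4 * t)⁻¹ * ‖x‖ ^ 2 :=
    fun x => by ring
  simp only [heatKernel, hexp]
  rw [integral_const_mul, GaussianFourier.integral_rexp_neg_mul_sq_norm (by positivity),
    finrank_euclideanSpace_fin, show π / (4 * t)⁻¹ = 4 * π * t by rw [div_inv_eq_mul]; ring,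
    ← rpow_add (by positivity), neg_div, neg_add_cancel, rpow_zero]

theorem integrable_heatKernel (ht : 0 < t) : Integrable (heatKernel N t) :=
  Integrable.of_integral_ne_zero (by simp [integral_heatKernel ht])

theorem HasDerivAt.heatKernel_comp {γ : ℝ → EuclideanSpace ℝ (Fin N)}
    {γ' : EuclideanSpace ℝ (Fin N)} {s : ℝ} (hγ : HasDerivAt γ γ' s) :
    HasDerivAt (fun s => heatKernel N t (γ s))
      (-(⟪γ s, γ'⟫ / (2 * t)) * heatKernel N t (γ s)) s := by
  have hexp : HasDerivAt (fun s => -‖γ s‖ ^ 2 / (4 * t)) (-(2 * ⟪γ s, γ'⟫) / (4 * t)) s :=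
    hγ.norm_sq.neg.div_const (4 * t)
  exact (hexp.exp.const_mul _).congr_deriv (by simp only [heatKernel]; ring)

-- The factor `s e^{-s} ≤ 2 e^{-s/2}` is absorbed by doubling the time.
theorem sq_norm_div_mul_heatKernel_le (ht : 0 < t) (z : EuclideanSpace ℝ (Fin N)) :
    ‖z‖ ^ 2 / (4 * t) * heatKernel N t z ≤ 2 ^ ((N : ℝ) / 2 + 1) * heatKernel N (2 * t) z := by
  set s := ‖z‖ ^ 2 / (4 * t)
  have hs : s ≤ 2 * exp (s / 2) := by linarith [add_one_le_exp (s / 2)]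
  have hexp : exp (-‖z‖ ^ 2 / (4 * t)) = exp (-(s / 2)) * exp (-(s / 2)) := by
    rw [← exp_add]; congr 1; simp only [s]; ring
  have hexp2 : exp (-‖z‖ ^ 2 / (4 * (2 * t))) = exp (-(s / 2)) := by
    congr 1; simp only [s]; ring
  have hconst : 2 ^ ((N : ℝ) / 2 + 1) * (4 * π * (2 * t)) ^ (-(N : ℝ) / 2)
      = 2 * (4 * π * t) ^ (-(N : ℝ) / 2) := by
    rw [show 4 * π * (2 * t) = 2 * (4 * π * t) by ring, mul_rpow (by norm_num) (by positivity),
      ← mul_assoc, ← rpow_add two_pos, show (N : ℝ) / 2 + 1 + -(N : ℝ) / 2 = 1 by ring, rpow_one]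
  simp only [heatKernel, hexp, hexp2]
  rw [← mul_assoc (2 ^ _), hconst]
  have hmul : s * exp (-(s / 2)) ≤ 2 := by
    calc s * exp (-(s / 2)) ≤ 2 * exp (s / 2) * exp (-(s / 2)) := by gcongr
      _ = 2 := by rw [mul_assoc, ← exp_add]; simp
  calc s * ((4 * π * t) ^ (-(N : ℝ) / 2) * (exp (-(s / 2)) * exp (-(s / 2))))
      = (4 * π * t) ^ (-(N : ℝ) / 2) * (s * exp (-(s / 2))) * exp (-(s / 2)) := by ring
    _ ≤ (4 * π * t) ^ (-(N : ℝ) / 2) * 2 * exp (-(s / 2)) := by gcongr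
    _ = 2 * (4 * π * t) ^ (-(N : ℝ) / 2) * exp (-(s / 2)) := by ring

end HeatKernel

section Remainder

variable {N : ℕ} {t : ℝ}

noncomputable def heatRemainder (N : ℕ) (t : ℝ) (x y : EuclideanSpace ℝ (Fin N)) : ℝ :=
  heatKernel N t (x - y) - heatKernel N t x - ⟪x, y⟫ / (2 * t) * heatKernel N t x

theorem continuous_heatRemainder (N : ℕ) (t : ℝ) :
    Continuous (Function.uncurry (heatRemainder N t)) := by
  unfold heatRemainder
  fun_prop

noncomputable def heatMajorant (N : ℕ) (t : ℝ) (z : EuclideanSpace ℝ (Fin N)) : ℝ :=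
  2 ^ ((N : ℝ) / 2 + 1) * heatKernel N (2 * t) z + heatKernel N t z / 2

@[fun_prop]
theorem continuous_heatMajorant (N : ℕ) (t : ℝ) : Continuous (heatMajorant N t) := by
  unfold heatMajorant
  fun_prop

theorem heatMajorant_nonneg (ht : 0 < t) (z : EuclideanSpace ℝ (Fin N)) :
    0 ≤ heatMajorant N t z :=
  add_nonneg (mul_nonneg (by positivity) (heatKernel_nonneg (by positivity) z))
    (div_nonneg (heatKernel_nonneg ht z) zero_le_two)

theorem integrable_heatMajorant (ht : 0 < t) : Integrable (heatMajorant N t) :=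
  ((integrable_heatKernel (by positivity)).const_mul _).add ((integrable_heatKernel ht).div_const 2)

theorem integral_heatMajorant (ht : 0 < t) :
    ∫ z, heatMajorant N t z = 2 ^ ((N : ℝ) / 2 + 1) + 1 / 2 := by
  unfold heatMajorant
  rw [integral_add ((integrable_heatKernel (by positivity)).const_mul _)
      ((integrable_heatKernel ht).div_const 2), integral_const_mul, integral_div,
    integral_heatKernel (by positivity), integral_heatKernel ht]
  ring

theorem abs_second_deriv_heatKernel_le (ht : 0 < t) (z y : EuclideanSpace ℝ (Fin N)) :
    |((⟪z, y⟫ / (2 * t)) ^ 2 - ‖y‖ ^ 2 / (2 * t)) * heatKernel N t z| ≤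
      ‖y‖ ^ 2 / t * heatMajorant N t z := by
  have hG := heatKernel_nonneg ht z
  have hcs : ⟪z, y⟫ ^ 2 ≤ (‖z‖ * ‖y‖) ^ 2 :=
    sq_le_sq.2 (by simpa [abs_mul] using abs_real_inner_le_norm z y)
  calc |((⟪z, y⟫ / (2 * t)) ^ 2 - ‖y‖ ^ 2 / (2 * t)) * heatKernel N t z|
      ≤ ((⟪z, y⟫ / (2 * t)) ^ 2 + ‖y‖ ^ 2 / (2 * t)) * heatKernel N t z := by
        rw [abs_mul, abs_of_nonneg hG]
        gcongr
        exact abs_le.2 ⟨by nlinarith [sq_nonneg (⟪z, y⟫ / (2 * t))], by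
          nlinarith [div_nonneg (sq_nonneg ‖y‖) (by positivity : (0 : ℝ) ≤ 2 * t)]⟩
    _ ≤ ((‖z‖ * ‖y‖) ^ 2 / (2 * t) ^ 2 + ‖y‖ ^ 2 / (2 * t)) * heatKernel N t z := by
        rw [div_pow]
        gcongr
    _ = ‖y‖ ^ 2 / t * (‖z‖ ^ 2 / (4 * t) * heatKernel N t z + heatKernel N t z / 2) := by
        field_simp
        ring
    _ ≤ ‖y‖ ^ 2 / t * heatMajorant N t z := by
        unfold heatMajorant
        gcongr ‖y‖ ^ 2 / t * (?_ + _)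
        exact sq_norm_div_mul_heatKernel_le ht z

theorem abs_heatRemainder_le (ht : 0 < t) (x y : EuclideanSpace ℝ (Fin N)) :
    |heatRemainder N t x y| ≤ ∫ r in (0 : ℝ)..1, ‖y‖ ^ 2 / t * heatMajorant N t (x - r • y) := by
  have hline : ∀ s : ℝ, HasDerivAt (fun s : ℝ => x - s • y) (-y) s := fun s => by
    simpa using ((hasDerivAt_id s).smul_const y).const_sub x
  set a : ℝ → ℝ := fun s => ⟪x - s • y, y⟫ / (2 * t)
  have hg : ∀ s, HasDerivAt (fun s => heatKernel N t (x - s • y))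
      (a s * heatKernel N t (x - s • y)) s := fun s =>
    (hline s).heatKernel_comp.congr_deriv (by simp [a, inner_neg_right, neg_div])
  have ha : ∀ s, HasDerivAt a (-‖y‖ ^ 2 / (2 * t)) s := fun s =>
    (((hline s).inner ℝ (hasDerivAt_const s y)).div_const (2 * t)).congr_deriv
      (by simp [neg_div])
  have hg' : ∀ s, HasDerivAt (fun s => a s * heatKernel N t (x - s • y))
      (((a s) ^ 2 - ‖y‖ ^ 2 / (2 * t)) * heatKernel N t (x - s • y)) s := fun s =>
    ((ha s).mul (hg s)).congr_deriv (by ring)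
  have hg''_cont : Continuous fun s =>
      ((a s) ^ 2 - ‖y‖ ^ 2 / (2 * t)) * heatKernel N t (x - s • y) := by
    simp only [a]
    fun_prop
  calc |heatRemainder N t x y|
      = ‖heatKernel N t (x - (1 : ℝ) • y) - heatKernel N t (x - (0 : ℝ) • y)
          - a 0 * heatKernel N t (x - (0 : ℝ) • y)‖ := by
        simp [heatRemainder, a]
    _ ≤ ∫ r in (0 : ℝ)..1, ‖((a r) ^ 2 - ‖y‖ ^ 2 / (2 * t)) * heatKernel N t (x - r • y)‖ :=
        norm_sub_sub_deriv_le_integral_norm hg hg' hg''_cont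
    _ ≤ ∫ r in (0 : ℝ)..1, ‖y‖ ^ 2 / t * heatMajorant N t (x - r • y) :=
        intervalIntegral.integral_mono_on zero_le_one (hg''_cont.norm.intervalIntegrable _ _)
          (Continuous.intervalIntegrable (by fun_prop) 0 1)
          fun r _ => abs_second_deriv_heatKernel_le ht _ _

theorem lintegral_enorm_heatRemainder_le (ht : 0 < t) (y : EuclideanSpace ℝ (Fin N)) :
    ∫⁻ x, ‖heatRemainder N t x y‖ₑ ≤
      ENNReal.ofReal ((2 ^ ((N : ℝ) / 2 + 1) + 1 / 2) / t * ‖y‖ ^ 2) := by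
  set f : EuclideanSpace ℝ (Fin N) → ℝ → ℝ := fun x r =>
    ‖y‖ ^ 2 / t * heatMajorant N t (x - r • y)
  have hf_cont : Continuous (Function.uncurry f) := by
    simp only [f, Function.uncurry_def]
    fun_prop
  have hf_slice : ∀ x, Continuous (f x) := fun x => by
    simp only [f]
    fun_prop
  have hf_nonneg : ∀ x r, 0 ≤ f x r := fun x r =>
    mul_nonneg (by positivity) (heatMajorant_nonneg ht _)
  have hf_int : ∀ r, Integrable (f · r) := fun r =>
    ((integrable_heatMajorant ht).comp_sub_right (r • y)).const_mul _
  have hf_integral : ∀ r, ∫ x, f x r = (2 ^ ((N : ℝ) / 2 + 1) + 1 / 2) / t * ‖y‖ ^ 2 :=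
    fun r => by
      simp only [f]
      rw [integral_const_mul, integral_sub_right_eq_self (heatMajorant N t),
        integral_heatMajorant ht]
      ring
  calc ∫⁻ x, ‖heatRemainder N t x y‖ₑ
      ≤ ∫⁻ x, ∫⁻ r in Set.Ioc (0 : ℝ) 1, ENNReal.ofReal (f x r) := lintegral_mono fun x => by
        rw [← ofReal_integral_eq_lintegral_ofReal (hf_slice x).integrableOn_Ioc
            (ae_of_all _ (hf_nonneg x)),
          ← intervalIntegral.integral_of_le zero_le_one, Real.enorm_eq_ofReal_abs]
        exact ENNReal.ofReal_le_ofReal (abs_heatRemainder_le ht x y)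
    _ = ∫⁻ r in Set.Ioc (0 : ℝ) 1, ∫⁻ x, ENNReal.ofReal (f x r) :=
        lintegral_lintegral_swap hf_cont.measurable.ennreal_ofReal.aemeasurable
    _ = ∫⁻ r in Set.Ioc (0 : ℝ) 1, ENNReal.ofReal
          ((2 ^ ((N : ℝ) / 2 + 1) + 1 / 2) / t * ‖y‖ ^ 2) := by
        refine lintegral_congr fun r => ?_
        rw [← ofReal_integral_eq_lintegral_ofReal (hf_int r) (ae_of_all _ (hf_nonneg · r)),
          hf_integral]
    _ = ENNReal.ofReal ((2 ^ ((N : ℝ) / 2 + 1) + 1 / 2) / t * ‖y‖ ^ 2) := by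
        simp [Real.volume_Ioc]

end Remainder

theorem heatSol_sub_expansion_eq_integral_heatRemainder {N : ℕ} {t : ℝ} (ht : 0 < t)
    {u₀ : EuclideanSpace ℝ (Fin N) → ℝ} (hu : Integrable u₀)
    (hu1 : Integrable (fun y => ‖y‖ * u₀ y)) (x : EuclideanSpace ℝ (Fin N)) :
    heatSol N u₀ x t - (∫ y, u₀ y) * heatKernel N t x +
        ∑ i : Fin N, (∫ y : EuclideanSpace ℝ (Fin N), y i * u₀ y) *
          (-(x i / (2 * t)) * heatKernel N t x) =
      ∫ y, heatRemainder N t x y * u₀ y := by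
  have hK : Integrable (fun y => heatKernel N t (x - y) * u₀ y) :=
    hu.bdd_mul (by fun_prop) (ae_of_all _ fun y => by
      rw [Real.norm_of_nonneg (heatKernel_nonneg ht _)]
      exact heatKernel_le ht _)
  have hsplit : ∀ y, heatRemainder N t x y * u₀ y = heatKernel N t (x - y) * u₀ y -
      heatKernel N t x * u₀ y - heatKernel N t x / (2 * t) * (⟪x, y⟫ * u₀ y) := fun y => by
    unfold heatRemainder
    ring
  have hK' : Integrable (fun y => heatKernel N t (x - y) * u₀ y - heatKernel N t x * u₀ y) :=
    hK.sub (hu.const_mul _)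
  simp_rw [hsplit]
  rw [integral_sub hK' ((integrable_inner_mul hu.1 hu1 x).const_mul _),
    integral_sub hK (hu.const_mul _), integral_const_mul, integral_const_mul,
    integral_inner_mul_eq_sum hu.1 hu1, Finset.mul_sum, sub_eq_add_neg _ (∑ i, _),
    ← Finset.sum_neg_distrib]
  simp only [heatSol]
  congr 1
  · ring
  · exact Finset.sum_congr rfl fun i _ => by ring

theorem heat_convergence_rate_second_moment_L1_general (N : ℕ) :
    ∃ C : ℝ, 0 < C ∧ ∀ u₀ : EuclideanSpace ℝ (Fin N) → ℝ,
      Integrable u₀ →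
      Integrable (fun y => ‖y‖ ^ 2 * |u₀ y|) →
      ∀ t : ℝ, 0 < t →
        (∫ x, |heatSol N u₀ x t - (∫ y, u₀ y) * heatKernel N t x +
            ∑ i : Fin N, (∫ y : EuclideanSpace ℝ (Fin N), y i * u₀ y) *
              (-(x i / (2 * t)) * heatKernel N t x)|) ≤
          C * (∫ y, ‖y‖ ^ 2 * |u₀ y|) * t ^ (-(1 : ℝ)) := by
  refine ⟨2 ^ ((N : ℝ) / 2 + 1) + 1 / 2, by positivity, fun u₀ hu hu2 t ht => ?_⟩
  simp_rw [heatSol_sub_expansion_eq_integral_heatRemainder ht hu (hu.norm_mul_of_sq_norm_mul hu2)]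
  calc ∫ x, |∫ y, heatRemainder N t x y * u₀ y|
      ≤ ∫ y, (2 ^ ((N : ℝ) / 2 + 1) + 1 / 2) / t * ‖y‖ ^ 2 * |u₀ y| :=
        integral_abs_integral_mul_le (continuous_heatRemainder N t).aemeasurable hu.aemeasurable
          (fun y => by positivity) (by simpa only [mul_assoc] using hu2.const_mul _)
          fun y => lintegral_enorm_heatRemainder_le ht y
    _ = (2 ^ ((N : ℝ) / 2 + 1) + 1 / 2) * (∫ y, ‖y‖ ^ 2 * |u₀ y|) * t ^ (-(1 : ℝ)) := by
        simp_rw [mul_assoc]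
        rw [integral_const_mul, rpow_neg_one]
        ring

/-- Second-order `L¹` asymptotics: for data with finite second absolute moment,
`‖u(·,t) − M·G_t + Σᵢ 𝒩_{1,i} ∂_{x_i}G_t‖_{L¹} ≤ C·𝒩₂·t^{-1}` with `C = C(N)`,
where `∂_{x_i}G_t(x) = -(x_i/(2t))·G_t(x)`. -/
theorem heat_convergence_rate_second_moment_L1 (N : ℕ) (hN : 1 ≤ N) :
    ∃ C : ℝ, 0 < C ∧ ∀ u₀ : EuclideanSpace ℝ (Fin N) → ℝ,
      Integrable u₀ →
      Integrable (fun y => ‖y‖ ^ 2 * |u₀ y|) →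
      ∀ t : ℝ, 0 < t →
        (∫ x, |heatSol N u₀ x t - (∫ y, u₀ y) * heatKernel N t x +
            ∑ i : Fin N, (∫ y : EuclideanSpace ℝ (Fin N), y i * u₀ y) *
              (-(x i / (2 * t)) * heatKernel N t x)|) ≤
          C * (∫ y, ‖y‖ ^ 2 * |u₀ y|) * t ^ (-(1 : ℝ)) :=
  heat_convergence_rate_second_moment_L1_general N
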